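/- Let ([p*],[u*]) be an optimal process for the pro-rata control problem with η∈[0,1) and γ>0, and let B*(t)=Σ_{k=0}^{t} 1ᵀu*(k). If B*(t*)<F(t*) at some period t*<T−1, then no liquidity is injected after period t*: u*(t)=0 for all t with t*<t≤T−1. -/

import Mathlib

open Finset

noncomputable section

/-- The relative (pro-rata) liability matrix `A` built from the nominal liability matrix. -/
def proRata {n : ℕ} (Pbar : Matrix (Fin n) (Fin n) ℝ) : Matrix (Fin n) (Fin n) ℝ :=
  fun i j =>
    if 0 < ∑ k, Pbar i k then Pbar i j / ∑ k, Pbar i k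
    else if i = j then 1 else 0

/-- Residual liability vectors: `p̄(0) = p̄`, `p̄(t+1) = α (p̄(t) - p(t))`. -/
def resLiabVec {n : ℕ} (α : ℝ) (pbar : Fin n → ℝ)
    (p : ℕ → Fin n → ℝ) : ℕ → Fin n → ℝ
  | 0 => pbar
  | t + 1 => fun i => α * (resLiabVec α pbar p t i - p t i)

/-- Net worths: `w(0) = 0`, `w(t+1) = w(t) + c(t) + Aᵀ p(t) - p(t)`. -/
def netWorthVec {n : ℕ} (A : Matrix (Fin n) (Fin n) ℝ)
    (c p : ℕ → Fin n → ℝ) : ℕ → Fin n → ℝ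
  | 0 => fun _ => 0
  | t + 1 => fun i => netWorthVec A c p t i + c t i + (∑ j, A j i * p t j) - p t i

/-- Cumulative injected cash `B(t) = Σ_{k=0}^{t} 1ᵀ u(k)`. -/
def budget {n : ℕ} (u : ℕ → Fin n → ℝ) (t : ℕ) : ℝ :=
  ∑ k ∈ range (t + 1), ∑ i, u k i

/-- Feasibility of a process `([p],[u])` for the pro-rata control problem. -/
def FeasiblePro {n : ℕ} (T : ℕ) (α : ℝ) (pbar : Fin n → ℝ)
    (A : Matrix (Fin n) (Fin n) ℝ) (e : ℕ → Fin n → ℝ) (F : ℕ → ℝ)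
    (p u : ℕ → Fin n → ℝ) : Prop :=
  ∀ t, t < T →
    (∀ i, 0 ≤ p t i) ∧ (∀ i, 0 ≤ u t i) ∧
    (∀ i, p t i ≤ resLiabVec α pbar p t i) ∧
    (∀ i, 0 ≤ netWorthVec A (fun s i => e s i + u s i) p (t + 1) i) ∧
    budget u t ≤ F t

/-- Cost `J([p],[u])` of the pro-rata control problem. -/
def costPro {n : ℕ} (T : ℕ) (α η γ : ℝ) (pbar : Fin n → ℝ)
    (p u : ℕ → Fin n → ℝ) : ℝ :=
  (1 - η) * ∑ t ∈ range T, ∑ i, (resLiabVec α pbar p t i - p t i)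
    + η * ∑ i, resLiabVec α pbar p T i
    + γ * budget u (T - 1)

/-- Optimality for the pro-rata control problem. -/
def OptimalPro {n : ℕ} (T : ℕ) (α η γ : ℝ) (pbar : Fin n → ℝ)
    (A : Matrix (Fin n) (Fin n) ℝ) (e : ℕ → Fin n → ℝ) (F : ℕ → ℝ)
    (p u : ℕ → Fin n → ℝ) : Prop :=
  FeasiblePro T α pbar A e F p u ∧
  ∀ p' u', FeasiblePro T α pbar A e F p' u' →
    costPro T α η γ pbar p u ≤ costPro T α η γ pbar p' u'

/-!
Let `t > t*` be the first period with an injection `u*(t)ᵢ > 0`; by minimality the cumulative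
budget stays at `B*(t*) < F(t*)` throughout `[t*, t)`. If node `i` pays nothing from `t` on, the
injected cash is never used, and dropping it saves `γ u*(t)ᵢ`. Otherwise let `q ≥ t` be the first
period in which `i` pays. Move an amount `μ` of the injection from `t` to `t*`: node `i` uses
`ν = μ / α^(q - t*)` of it to repay earlier, the rest `μ - ν` goes directly to its creditors pro
rata, and `i` repays `μ` less at `q`. Then the residual liability of `i` is lower by
`α^(σ - t*) ν` on `(t*, q]` and unchanged afterwards, each creditor `j` is ahead by `μ aᵢⱼ` on
`(t*, q]`, node `i` is behind by `μ` only on `(t, q]`, where it still holds the cash injected at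
`t`, and the budget is higher by `μ` only on `[t*, t)`. The unpaid liabilities drop by at least
`ν`, hence the cost by `(1 - η) ν`. Both competitors contradict optimality.
-/

variable {n : ℕ}

lemma resLiabVec_add (α : ℝ) (pbar : Fin n → ℝ) (p d : ℕ → Fin n → ℝ) (t : ℕ) :
    resLiabVec α pbar (p + d) t = resLiabVec α pbar p t + resLiabVec α 0 d t := by
  induction t with
  | zero => simp [resLiabVec]
  | succ t ih =>
    ext i
    simp only [resLiabVec, ih, Pi.add_apply]
    ring

lemma netWorthVec_add (A : Matrix (Fin n) (Fin n) ℝ) (c c' p p' : ℕ → Fin n → ℝ) (t : ℕ) :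
    netWorthVec A (c + c') (p + p') t = netWorthVec A c p t + netWorthVec A c' p' t := by
  induction t with
  | zero => ext; simp [netWorthVec]
  | succ t ih =>
    ext i
    simp only [netWorthVec, ih, Pi.add_apply, mul_add, Finset.sum_add_distrib]
    ring

lemma budget_add (u v : ℕ → Fin n → ℝ) (t : ℕ) : budget (u + v) t = budget u t + budget v t := by
  simp [budget, Finset.sum_add_distrib]

lemma costPro_add (T : ℕ) (α η γ : ℝ) (pbar : Fin n → ℝ) (p d u v : ℕ → Fin n → ℝ) :
    costPro T α η γ pbar (p + d) (u + v) =
      costPro T α η γ pbar p u + costPro T α η γ 0 d v := by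
  simp only [costPro, resLiabVec_add, budget_add, Pi.add_apply, add_sub_add_comm,
    Finset.sum_add_distrib]
  ring

lemma feasiblePro_add_iff (T : ℕ) (α : ℝ) (pbar : Fin n → ℝ) (A : Matrix (Fin n) (Fin n) ℝ)
    (e : ℕ → Fin n → ℝ) (F : ℕ → ℝ) (p d u v : ℕ → Fin n → ℝ) :
    FeasiblePro T α pbar A e F (p + d) (u + v) ↔ ∀ t, t < T →
      (∀ i, 0 ≤ p t i + d t i) ∧ (∀ i, 0 ≤ u t i + v t i) ∧
      (∀ i, p t i + d t i ≤ resLiabVec α pbar p t i + resLiabVec α 0 d t i) ∧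
      (∀ i, 0 ≤ netWorthVec A (fun s i => e s i + u s i) p (t + 1) i +
        netWorthVec A v d (t + 1) i) ∧
      budget u t + budget v t ≤ F t := by
  have hc : (fun s i => e s i + (u + v) s i) = (fun s i => e s i + u s i) + v := by
    funext s i
    simp only [Pi.add_apply, add_assoc]
  simp only [FeasiblePro, hc]
  simp only [netWorthVec_add, resLiabVec_add, budget_add, Pi.add_apply]

lemma resLiabVec_single (α : ℝ) (s : ℕ) (x : Fin n → ℝ) (t : ℕ) (i : Fin n) :
    resLiabVec α 0 (Pi.single s x) t i = if s < t then -(α ^ (t - s) * x i) else 0 := by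
  induction t with
  | zero => simp [resLiabVec]
  | succ t ih =>
    simp only [resLiabVec, ih]
    rcases lt_trichotomy s t with h | rfl | h
    · rw [if_pos h, if_pos (by omega), Pi.single_eq_of_ne h.ne',
        show t + 1 - s = t - s + 1 by omega]
      simp only [Pi.zero_apply]
      ring
    · simp
    · rw [if_neg (by omega), if_neg (by omega), Pi.single_eq_of_ne h.ne]
      simp

lemma netWorthVec_single (A : Matrix (Fin n) (Fin n) ℝ) (s s' : ℕ) (x y : Fin n → ℝ) (t : ℕ)
    (j : Fin n) :
    netWorthVec A (Pi.single s x) (Pi.single s' y) t j =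
      (if s < t then x j else 0) + (if s' < t then ∑ m, A m j * y m - y j else 0) := by
  induction t with
  | zero => simp [netWorthVec]
  | succ t ih =>
    simp only [netWorthVec, ih, Pi.single_apply, Nat.lt_succ_iff_lt_or_eq, @eq_comm _ s t,
      @eq_comm _ s' t]
    split_ifs <;> first | omega | simp <;> ring

lemma budget_single (s : ℕ) (x : Fin n → ℝ) (t : ℕ) :
    budget (Pi.single s x) t = if s ≤ t then ∑ j, x j else 0 := by
  have h : ∀ k, ∑ j, (Pi.single s x : ℕ → Fin n → ℝ) k j =
      (Pi.single s (∑ j, x j) : ℕ → ℝ) k := by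
    intro k
    by_cases hk : k = s
    · subst hk; simp
    · simp [hk]
  simp only [budget, h, Finset.sum_pi_single', Finset.mem_range, Nat.lt_succ_iff]

lemma resLiabVec_le_pow_mul {α : ℝ} (hα : 0 ≤ α) {pbar : Fin n → ℝ} {p : ℕ → Fin n → ℝ}
    {i : Fin n} {σ ρ : ℕ} (hσρ : σ ≤ ρ) (hp : ∀ k, σ ≤ k → k < ρ → 0 ≤ p k i) :
    resLiabVec α pbar p ρ i ≤ α ^ (ρ - σ) * resLiabVec α pbar p σ i := by
  induction ρ, hσρ using Nat.le_induction with
  | base => simp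
  | succ ρ hσρ ih =>
    have hpρ := hp ρ hσρ (by omega)
    have ih' := ih fun k h1 h2 => hp k h1 (by omega)
    calc resLiabVec α pbar p (ρ + 1) i = α * (resLiabVec α pbar p ρ i - p ρ i) := rfl
      _ ≤ α * (α ^ (ρ - σ) * resLiabVec α pbar p σ i) := by gcongr; linarith
      _ = α ^ (ρ + 1 - σ) * resLiabVec α pbar p σ i := by
        rw [show ρ + 1 - σ = ρ - σ + 1 by omega, pow_succ]; ring

lemma le_netWorthVec_of_idle {A : Matrix (Fin n) (Fin n) ℝ} (hA : ∀ i j, 0 ≤ A i j)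
    {c p : ℕ → Fin n → ℝ} {i : Fin n} {t ρ : ℕ} (htρ : t < ρ)
    (hc : ∀ k, t < k → k < ρ → 0 ≤ c k i) (hp : ∀ k, t ≤ k → k < ρ → ∀ j, 0 ≤ p k j)
    (hidle : ∀ k, t ≤ k → k < ρ → p k i = 0) :
    netWorthVec A c p t i + c t i ≤ netWorthVec A c p ρ i := by
  have hinflow : ∀ k, t ≤ k → k < ρ → 0 ≤ ∑ m, A m i * p k m := fun k h1 h2 =>
    Finset.sum_nonneg fun m _ => mul_nonneg (hA m i) (hp k h1 h2 m)
  induction ρ, htρ using Nat.le_induction with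
  | base =>
    have := hinflow t le_rfl (by omega)
    simp only [netWorthVec, hidle t le_rfl (by omega)]
    linarith
  | succ ρ htρ ih =>
    have := hinflow ρ (by omega) (by omega)
    have := hc ρ htρ (by omega)
    have := ih (fun k h1 h2 => hc k h1 (by omega)) (fun k h1 h2 => hp k h1 (by omega))
      (fun k h1 h2 => hidle k h1 (by omega)) (fun k h1 h2 => hinflow k h1 (by omega))
    simp only [netWorthVec, hidle ρ (by omega) (by omega)]
    linarith

lemma budget_eq_of_forall_eq_zero {u : ℕ → Fin n → ℝ} {s s' : ℕ} (hss' : s ≤ s')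
    (hu : ∀ k, s < k → k ≤ s' → ∀ j, u k j = 0) : budget u s' = budget u s := by
  induction s', hss' using Nat.le_induction with
  | base => rfl
  | succ k hsk ih =>
    rw [budget, Finset.sum_range_succ, ← budget, ih fun m h1 h2 => hu m h1 (by omega)]
    simp [hu (k + 1) (by omega) le_rfl]

lemma proRata_nonneg {Pbar : Matrix (Fin n) (Fin n) ℝ} (hP : ∀ i j, 0 ≤ Pbar i j) (i j : Fin n) :
    0 ≤ proRata Pbar i j := by
  unfold proRata
  split_ifs with h
  · exact div_nonneg (hP i j) h.le
  · exact zero_le_one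
  · exact le_rfl

lemma proRata_self {Pbar : Matrix (Fin n) (Fin n) ℝ} (hdiag : ∀ i, Pbar i i = 0) {i : Fin n}
    (hi : 0 < ∑ k, Pbar i k) : proRata Pbar i i = 0 := by
  simp [proRata, hi, hdiag]

lemma sum_proRata {Pbar : Matrix (Fin n) (Fin n) ℝ} {i : Fin n} (hi : 0 < ∑ k, Pbar i k) :
    ∑ j, proRata Pbar i j = 1 := by
  simp only [proRata, if_pos hi, ← Finset.sum_div, div_self hi.ne']

def earlyRepayment (i : Fin n) (s q : ℕ) (ν μ : ℝ) : ℕ → Fin n → ℝ :=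
  Pi.single s (Pi.single i ν) + Pi.single q (Pi.single i (-μ))

def earlyInjection (i : Fin n) (s t : ℕ) (ν μ : ℝ) (A : Matrix (Fin n) (Fin n) ℝ) :
    ℕ → Fin n → ℝ :=
  Pi.single s (Pi.single i ν + (μ - ν) • A i) + Pi.single t (Pi.single i (-μ))

section

variable {T : ℕ} {α η γ : ℝ} {pbar : Fin n → ℝ} {A : Matrix (Fin n) (Fin n) ℝ}
  {e : ℕ → Fin n → ℝ} {F : ℕ → ℝ} {p u : ℕ → Fin n → ℝ} {i : Fin n} {s q t : ℕ} {ν μ : ℝ}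

namespace FeasiblePro

lemma netWorthVec_nonneg (h : FeasiblePro T α pbar A e F p u) {σ : ℕ} (hσ : σ ≤ T) (j : Fin n) :
    0 ≤ netWorthVec A (fun s i => e s i + u s i) p σ j := by
  rcases σ with _ | σ
  · simp [netWorthVec]
  · exact (h σ (by omega)).2.2.2.1 j

lemma pbar_pos (h : FeasiblePro T α pbar A e F p u) (hα : 0 < α) (hqT : q < T)
    (hpq : 0 < p q i) : 0 < pbar i := by
  have hr := resLiabVec_le_pow_mul hα.le (pbar := pbar) (Nat.zero_le q)
    fun k _ hk => (h k (by omega)).1 i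
  have : 0 < α ^ q * resLiabVec α pbar p 0 i := (hpq.trans_le ((h q hqT).2.2.1 i)).trans_le hr
  exact pos_of_mul_pos_right this (pow_nonneg hα.le q)

lemma pow_mul_le_slack (h : FeasiblePro T α pbar A e F p u) (hα : 0 < α) {σ : ℕ}
    (hsσ : s ≤ σ) (hσq : σ < q) (hqT : q < T) {x : ℝ}
    (hx : α ^ (q - s) * x ≤ p q i) :
    α ^ (σ - s) * x ≤ resLiabVec α pbar p σ i - p σ i := by
  have hr := resLiabVec_le_pow_mul hα.le (pbar := pbar) (Nat.succ_le_of_lt hσq)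
    fun k _ hk => (h k (by omega)).1 i
  refine le_of_mul_le_mul_left ?_ (pow_pos hα (q - σ))
  calc α ^ (q - σ) * (α ^ (σ - s) * x) = α ^ (q - s) * x := by
        rw [← mul_assoc, ← pow_add, show q - σ + (σ - s) = q - s by omega]
    _ ≤ resLiabVec α pbar p q i := hx.trans ((h q hqT).2.2.1 i)
    _ ≤ α ^ (q - (σ + 1)) * (α * (resLiabVec α pbar p σ i - p σ i)) := hr
    _ = α ^ (q - σ) * (resLiabVec α pbar p σ i - p σ i) := by
        rw [← mul_assoc, ← pow_succ, show q - (σ + 1) + 1 = q - σ by omega]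

lemma le_netWorthVec_of_idle (h : FeasiblePro T α pbar A e F p u) (hA : ∀ i j, 0 ≤ A i j)
    (he : ∀ t, t < T → ∀ i, 0 ≤ e t i) {ρ : ℕ} (htρ : t < ρ) (hρT : ρ ≤ T)
    (hidle : ∀ k, t ≤ k → k < ρ → p k i = 0) :
    u t i ≤ netWorthVec A (fun s i => e s i + u s i) p ρ i := by
  have := _root_.le_netWorthVec_of_idle hA (c := fun s i => e s i + u s i) htρ
    (fun k _ hk => add_nonneg (he k (by omega) i) ((h k (by omega)).2.1 i))
    (fun k _ hk => (h k (by omega)).1) hidle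
  linarith [h.netWorthVec_nonneg (σ := t) (by omega) i, he t (by omega) i]

end FeasiblePro

lemma exists_cheaper_of_idle_injection (hfeas : FeasiblePro T α pbar A e F p u)
    (hA : ∀ i j, 0 ≤ A i j) (he : ∀ t, t < T → ∀ i, 0 ≤ e t i) (hγ : 0 < γ) (htT : t < T)
    (hu : 0 < u t i) (hidle : ∀ σ, t ≤ σ → σ < T → p σ i = 0) :
    ∃ p' u', FeasiblePro T α pbar A e F p' u' ∧
      costPro T α η γ pbar p' u' < costPro T α η γ pbar p u := by
  set v : ℕ → Fin n → ℝ := Pi.single t (Pi.single i (-u t i))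
  have hv : ∀ s j, v s j = if s = t ∧ j = i then -u t i else 0 := by
    intro s j
    by_cases hs : s = t <;> by_cases hj : j = i <;> simp [v, hs, hj]
  have hr0 : ∀ s j, resLiabVec α 0 (0 : ℕ → Fin n → ℝ) s j = 0 := fun s j => by
    simpa using resLiabVec_single α 0 0 s j
  have hw0 : ∀ σ j, netWorthVec A v 0 σ j = if j = i ∧ t < σ then -u t i else 0 := by
    intro σ j
    have := netWorthVec_single A t t (Pi.single i (-u t i)) 0 σ j
    simp only [Pi.single_zero] at this
    rw [this]
    by_cases hj : j = i <;> simp [hj]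
  refine ⟨p + 0, u + v, (feasiblePro_add_iff ..).2 fun s hs => ⟨?_, ?_, ?_, ?_, ?_⟩, ?_⟩
  · simpa using (hfeas s hs).1
  · intro j
    rw [hv]
    split_ifs with h
    · rw [h.1, h.2]; simp
    · simpa using (hfeas s hs).2.1 j
  · simpa [hr0] using (hfeas s hs).2.2.1
  · intro j
    rw [hw0]
    split_ifs with h
    · obtain ⟨rfl, hts⟩ := h
      linarith [hfeas.le_netWorthVec_of_idle hA he hts (by omega)
        fun k h1 _ => hidle k h1 (by omega)]
    · simpa using (hfeas s hs).2.2.2.1 j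
  · rw [budget_single]
    have := (hfeas s hs).2.2.2.2
    split_ifs <;> simp <;> linarith
  · have hcost : costPro T α η γ 0 0 v = -(γ * u t i) := by
      simp [costPro, hr0, v, budget_single, show t ≤ T - 1 by omega]
    rw [costPro_add, hcost]
    linarith [mul_pos hγ hu]

lemma earlyRepayment_apply (σ : ℕ) (j : Fin n) :
    earlyRepayment i s q ν μ σ j =
      if j = i then (if σ = s then ν else 0) - (if σ = q then μ else 0) else 0 := by
  simp only [earlyRepayment, Pi.add_apply, Pi.single_apply]
  split_ifs <;> simp_all [sub_eq_add_neg]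

lemma resLiabVec_earlyRepayment (hsq : s < q) (hνμ : α ^ (q - s) * ν = μ) (σ : ℕ) (j : Fin n) :
    resLiabVec α 0 (earlyRepayment i s q ν μ) σ j =
      -(if j = i ∧ s < σ ∧ σ ≤ q then α ^ (σ - s) * ν else 0) := by
  rw [earlyRepayment, resLiabVec_add, Pi.add_apply, resLiabVec_single, resLiabVec_single]
  by_cases hj : j = i
  · subst hj
    simp only [Pi.single_eq_same, true_and]
    rcases le_or_gt σ q with hσ | hσ
    · rw [if_neg (by omega : ¬ q < σ)]
      split_ifs <;> first | omega | ring
    · rw [if_pos hσ, if_pos (by omega), if_neg (by omega), ← hνμ,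
        show σ - s = σ - q + (q - s) by omega, pow_add]
      ring
  · simp [hj]

lemma netWorthVec_earlyInjection_earlyRepayment (hAii : A i i = 0) (hst : s < t) (htq : t ≤ q)
    (σ : ℕ) (j : Fin n) :
    netWorthVec A (earlyInjection i s t ν μ A) (earlyRepayment i s q ν μ) σ j =
      (if s < σ ∧ σ ≤ q then μ * A i j else 0) - (if j = i ∧ t < σ ∧ σ ≤ q then μ else 0) := by
  rw [earlyInjection, earlyRepayment, netWorthVec_add, Pi.add_apply, netWorthVec_single,
    netWorthVec_single]
  have hsum : ∀ x : ℝ, ∑ m, A m j * (Pi.single i x : Fin n → ℝ) m = A i j * x := fun x => by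
    simp [Pi.single_apply]
  simp only [hsum, Pi.add_apply, Pi.smul_apply, smul_eq_mul]
  by_cases hj : j = i
  · subst hj
    simp only [Pi.single_eq_same, hAii, true_and]
    split_ifs <;> first | omega | ring
  · simp only [Pi.single_eq_of_ne hj, hj, false_and, ↓reduceIte]
    split_ifs <;> first | omega | ring

lemma budget_earlyInjection (hrow : ∑ j, A i j = 1) (hst : s < t) (σ : ℕ) :
    budget (earlyInjection i s t ν μ A) σ = if s ≤ σ ∧ σ < t then μ else 0 := by
  rw [earlyInjection, budget_add, budget_single, budget_single]
  simp only [Pi.add_apply, Pi.smul_apply, smul_eq_mul, Finset.sum_add_distrib,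
    ← Finset.mul_sum, hrow, Finset.sum_pi_single', Finset.mem_univ, if_true]
  split_ifs <;> first | omega | ring

lemma earlyInjection_apply (σ : ℕ) (j : Fin n) :
    earlyInjection i s t ν μ A σ j =
      (if σ = s then (if j = i then ν else 0) + (μ - ν) * A i j else 0) -
        (if σ = t ∧ j = i then μ else 0) := by
  simp only [earlyInjection, Pi.add_apply, Pi.single_apply]
  split_ifs <;> simp_all [sub_eq_add_neg]

lemma costPro_earlyRepayment_earlyInjection_neg (hα : 0 ≤ α) (hη : η < 1) (hν : 0 < ν)
    (hrow : ∑ j, A i j = 1) (hst : s < t) (htq : t ≤ q) (hqT : q < T) (hνμ : α ^ (q - s) * ν = μ) :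
    costPro T α η γ 0 (earlyRepayment i s q ν μ) (earlyInjection i s t ν μ A) < 0 := by
  set S := ∑ σ ∈ range T, if s < σ ∧ σ ≤ q then α ^ (σ - s) * ν else 0
  have hres : ∀ σ, ∑ j, resLiabVec α 0 (earlyRepayment i s q ν μ) σ j =
      -(if s < σ ∧ σ ≤ q then α ^ (σ - s) * ν else 0) := fun σ => by
    simp [resLiabVec_earlyRepayment (hst.trans_le htq) hνμ, ite_and]
  have hpay : ∀ σ, ∑ j, earlyRepayment i s q ν μ σ j =
      (if σ = s then ν else 0) - (if σ = q then μ else 0) := fun σ => by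
    simp [earlyRepayment_apply]
  have hSμ : μ ≤ S := by
    have := Finset.single_le_sum (f := fun σ => if s < σ ∧ σ ≤ q then α ^ (σ - s) * ν else 0)
      (fun σ _ => by positivity) (Finset.mem_range.2 hqT)
    simpa [hst.trans_le htq, hνμ] using this
  have hcost : costPro T α η γ 0 (earlyRepayment i s q ν μ) (earlyInjection i s t ν μ A) =
      (1 - η) * (μ - ν - S) := by
    simp only [costPro, Finset.sum_sub_distrib, hres, hpay, Finset.sum_neg_distrib,
      budget_earlyInjection hrow hst]
    simp only [Finset.sum_ite_eq', Finset.mem_range, hqT, (hst.trans_le htq).trans hqT, true_and,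
      if_neg (not_le.2 hqT), if_neg (show ¬ (s ≤ T - 1 ∧ T - 1 < t) by omega), ↓reduceIte, S]
    ring
  rw [hcost]
  nlinarith

lemma FeasiblePro.add_earlyRepayment_le (hfeas : FeasiblePro T α pbar A e F p u) (hα : 0 < α)
    (hsq : s < q) (hqT : q < T) (hνμ : α ^ (q - s) * ν = μ) (hμp : μ ≤ p q i) {σ : ℕ}
    (hσ : σ < T) (j : Fin n) :
    p σ j + earlyRepayment i s q ν μ σ j ≤
      resLiabVec α pbar p σ j + resLiabVec α 0 (earlyRepayment i s q ν μ) σ j := by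
  rw [earlyRepayment_apply, resLiabVec_earlyRepayment hsq hνμ]
  have hle := (hfeas σ hσ).2.2.1 j
  by_cases hj : j = i
  · subst hj
    simp only [↓reduceIte, true_and]
    rcases lt_or_ge σ q with hσq | hσq
    · rw [if_neg hσq.ne]
      rcases lt_or_ge σ s with hσs | hσs
      · rw [if_neg hσs.ne, if_neg (by omega)]
        linarith
      · have := hfeas.pow_mul_le_slack hα hσs hσq hqT (hνμ.symm ▸ hμp)
        rcases hσs.eq_or_lt with rfl | hσs
        · simp only [↓reduceIte, lt_irrefl, false_and, Nat.sub_self, pow_zero, one_mul] at *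
          linarith
        · rw [if_neg hσs.ne', if_pos ⟨hσs, hσq.le⟩]
          linarith
    · rcases hσq.eq_or_lt with rfl | hσq
      · rw [if_neg hsq.ne', if_pos rfl, if_pos (show s < q ∧ q ≤ q from ⟨hsq, le_rfl⟩), hνμ]
        linarith
      · rw [if_neg (by omega), if_neg hσq.ne', if_neg (by omega)]
        linarith
  · simp only [hj, ↓reduceIte, false_and]
    linarith

lemma FeasiblePro.netWorthVec_add_early_nonneg (hfeas : FeasiblePro T α pbar A e F p u)
    (hA : ∀ i j, 0 ≤ A i j) (hAii : A i i = 0) (he : ∀ t, t < T → ∀ i, 0 ≤ e t i)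
    (hst : s < t) (htq : t ≤ q) (hμ : 0 ≤ μ) (hμu : μ ≤ u t i)
    (hidle : ∀ σ, t ≤ σ → σ < q → p σ i = 0) {σ : ℕ} (hσ : σ < T) (j : Fin n) :
    0 ≤ netWorthVec A (fun s i => e s i + u s i) p (σ + 1) j +
      netWorthVec A (earlyInjection i s t ν μ A) (earlyRepayment i s q ν μ) (σ + 1) j := by
  rw [netWorthVec_earlyInjection_earlyRepayment hAii hst htq]
  have hw := hfeas.netWorthVec_nonneg (σ := σ + 1) (by omega) j
  by_cases hj : j = i
  · subst hj
    simp only [hAii, mul_zero, ite_self, true_and, zero_sub]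
    split_ifs with h
    · linarith [hfeas.le_netWorthVec_of_idle hA he h.1 (by omega)
        fun k h1 _ => hidle k h1 (by omega)]
    · linarith
  · have := mul_nonneg hμ (hA i j)
    simp only [hj, false_and, ↓reduceIte, sub_zero]
    split_ifs <;> linarith

lemma FeasiblePro.add_earlyRepayment (hfeas : FeasiblePro T α pbar A e F p u) (hα : 1 ≤ α)
    (hA : ∀ i j, 0 ≤ A i j) (hAii : A i i = 0) (hrow : ∑ j, A i j = 1)
    (he : ∀ t, t < T → ∀ i, 0 ≤ e t i) (hF : ∀ s t, s ≤ t → F s ≤ F t) (hst : s < t)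
    (htq : t ≤ q) (hqT : q < T) (hB : ∀ σ, s ≤ σ → σ < t → budget u σ = budget u s) (hν : 0 ≤ ν)
    (hνμ : α ^ (q - s) * ν = μ) (hμF : budget u s + μ ≤ F s) (hμu : μ ≤ u t i)
    (hμp : μ ≤ p q i) (hidle : ∀ σ, t ≤ σ → σ < q → p σ i = 0) :
    FeasiblePro T α pbar A e F (p + earlyRepayment i s q ν μ)
      (u + earlyInjection i s t ν μ A) := by
  have hνμ' : ν ≤ μ := hνμ ▸ le_mul_of_one_le_left hν (one_le_pow₀ hα)
  refine (feasiblePro_add_iff ..).2 fun σ hσ => ⟨fun j => ?_, fun j => ?_,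
    hfeas.add_earlyRepayment_le (zero_lt_one.trans_le hα) (hst.trans_le htq) hqT hνμ hμp hσ,
    hfeas.netWorthVec_add_early_nonneg hA hAii he hst htq (hν.trans hνμ') hμu hidle hσ, ?_⟩
  · have := (hfeas σ hσ).1 j
    rw [earlyRepayment_apply]
    split_ifs <;> subst_vars <;> first | omega | linarith
  · have := (hfeas σ hσ).2.1 j
    have := mul_nonneg (sub_nonneg.2 hνμ') (hA i j)
    rw [earlyInjection_apply]
    by_cases h : σ = t ∧ j = i
    · obtain ⟨rfl, rfl⟩ := h
      simp only [hst.ne', ↓reduceIte, and_self]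
      linarith
    · rw [if_neg h]
      split_ifs <;> linarith
  · rw [budget_earlyInjection hrow hst]
    have := (hfeas σ hσ).2.2.2.2
    split_ifs with h
    · rw [hB σ h.1 h.2]
      linarith [hF s σ h.1]
    · linarith

lemma exists_cheaper_of_early_injection (hfeas : FeasiblePro T α pbar A e F p u) (hα : 1 ≤ α)
    (hA : ∀ i j, 0 ≤ A i j) (hAii : A i i = 0) (hrow : ∑ j, A i j = 1)
    (he : ∀ t, t < T → ∀ i, 0 ≤ e t i) (hF : ∀ s t, s ≤ t → F s ≤ F t) (hη : η < 1)
    (hst : s < t) (htq : t ≤ q) (hqT : q < T) (hB : ∀ σ, s ≤ σ → σ < t → budget u σ = budget u s)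
    (hslack : budget u s < F s) (hu : 0 < u t i) (hpq : 0 < p q i)
    (hidle : ∀ σ, t ≤ σ → σ < q → p σ i = 0) :
    ∃ p' u', FeasiblePro T α pbar A e F p' u' ∧
      costPro T α η γ pbar p' u' < costPro T α η γ pbar p u := by
  set μ := min (min (F s - budget u s) (u t i)) (p q i)
  have hμ : 0 < μ := lt_min (lt_min (sub_pos.2 hslack) hu) hpq
  have hpow : 0 < α ^ (q - s) := pow_pos (zero_lt_one.trans_le hα) _
  have hν : 0 < μ / α ^ (q - s) := div_pos hμ hpow
  have hνμ : α ^ (q - s) * (μ / α ^ (q - s)) = μ := mul_div_cancel₀ _ hpow.ne'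
  refine ⟨_, _, hfeas.add_earlyRepayment hα hA hAii hrow he hF hst htq hqT hB hν.le hνμ
    ?_ ?_ ?_ hidle, ?_⟩
  · linarith [min_le_left (min (F s - budget u s) (u t i)) (p q i),
      min_le_left (F s - budget u s) (u t i)]
  · exact (min_le_left _ _).trans (min_le_right _ _)
  · exact min_le_right _ _
  · rw [costPro_add]
    linarith [costPro_earlyRepayment_earlyInjection_neg (γ := γ) (zero_le_one.trans hα) hη hν
      hrow hst htq hqT hνμ]

lemma exists_cheaper_of_late_injection {Pbar : Matrix (Fin n) (Fin n) ℝ}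
    (hfeas : FeasiblePro T α pbar (proRata Pbar) e F p u) (hα : 1 ≤ α)
    (hPbar : ∀ i j, 0 ≤ Pbar i j) (hPdiag : ∀ i, Pbar i i = 0)
    (hpbar : ∀ i, pbar i = ∑ j, Pbar i j) (he : ∀ t, t < T → ∀ i, 0 ≤ e t i)
    (hF : ∀ s t, s ≤ t → F s ≤ F t) (hη : η < 1) (hγ : 0 < γ) (hst : s < t) (htT : t < T)
    (hB : ∀ σ, s ≤ σ → σ < t → budget u σ = budget u s) (hslack : budget u s < F s)
    (hu : 0 < u t i) :
    ∃ p' u', FeasiblePro T α pbar (proRata Pbar) e F p' u' ∧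
      costPro T α η γ pbar p' u' < costPro T α η γ pbar p u := by
  by_cases hidle : ∀ σ, t ≤ σ → σ < T → p σ i = 0
  · exact exists_cheaper_of_idle_injection hfeas (proRata_nonneg hPbar) he hγ htT hu hidle
  classical
  push Not at hidle
  obtain ⟨htq, hqT, hpq⟩ := Nat.find_spec hidle
  have hfirst : ∀ σ, t ≤ σ → σ < Nat.find hidle → p σ i = 0 := fun σ h1 h2 => by
    by_contra h
    exact Nat.find_min hidle h2 ⟨h1, by omega, h⟩
  have hpq' := ((hfeas _ hqT).1 i).lt_of_ne' hpq
  have hrow : 0 < ∑ j, Pbar i j := hpbar i ▸ hfeas.pbar_pos (by linarith) hqT hpq'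
  exact exists_cheaper_of_early_injection hfeas hα (proRata_nonneg hPbar)
    (proRata_self hPdiag hrow) (sum_proRata hrow) he hF hη hst htq hqT hB hslack hu hpq' hfirst

end

theorem stmt5_no_late_injection_prorata_general (n T : ℕ)
    (α : ℝ) (hα : 1 ≤ α)
    (Pbar : Matrix (Fin n) (Fin n) ℝ)
    (hPbar : ∀ i j, 0 ≤ Pbar i j) (hPdiag : ∀ i, Pbar i i = 0)
    (pbar : Fin n → ℝ) (hpbar : ∀ i, pbar i = ∑ j, Pbar i j)
    (A : Matrix (Fin n) (Fin n) ℝ) (hA : A = proRata Pbar)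
    (e : ℕ → Fin n → ℝ) (he : ∀ t, t < T → ∀ i, 0 ≤ e t i)
    (F : ℕ → ℝ) (hFmono : ∀ s t, s ≤ t → F s ≤ F t)
    (η γ : ℝ) (hη1 : η < 1) (hγ : 0 < γ)
    (pstar ustar : ℕ → Fin n → ℝ)
    (hopt : OptimalPro T α η γ pbar A e F pstar ustar) :
    ∀ tstar, tstar + 1 < T → budget ustar tstar < F tstar →
      ∀ t, tstar < t → t < T → ∀ i, ustar t i = 0 := by
  subst hA
  obtain ⟨hfeas, hmin⟩ := hopt
  intro tstar _ hslack t
  induction t using Nat.strong_induction_on with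
  | _ t IH =>
  intro hts htT i
  by_contra hne
  have hB : ∀ σ, tstar ≤ σ → σ < t → budget ustar σ = budget ustar tstar := fun σ h1 h2 =>
    budget_eq_of_forall_eq_zero h1 fun k hk1 hk2 => IH k (by omega) hk1 (by omega)
  obtain ⟨p', u', hfeas', hcost⟩ := exists_cheaper_of_late_injection hfeas hα hPbar hPdiag hpbar
    he hFmono hη1 hγ hts htT hB hslack (((hfeas t htT).2.1 i).lt_of_ne' hne)
  exact (hmin p' u' hfeas').not_gt hcost

theorem stmt5_no_late_injection_prorata (n T : ℕ) (hn : 1 ≤ n) (hT : 1 ≤ T)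
    (α : ℝ) (hα : 1 ≤ α)
    (Pbar : Matrix (Fin n) (Fin n) ℝ)
    (hPbar : ∀ i j, 0 ≤ Pbar i j) (hPdiag : ∀ i, Pbar i i = 0)
    (pbar : Fin n → ℝ) (hpbar : ∀ i, pbar i = ∑ j, Pbar i j)
    (A : Matrix (Fin n) (Fin n) ℝ) (hA : A = proRata Pbar)
    (e : ℕ → Fin n → ℝ) (he : ∀ t, t < T → ∀ i, 0 ≤ e t i)
    (F : ℕ → ℝ) (hF : ∀ t, 0 ≤ F t) (hFmono : ∀ s t, s ≤ t → F s ≤ F t)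
    (η γ : ℝ) (hη0 : 0 ≤ η) (hη1 : η < 1) (hγ : 0 < γ)
    (pstar ustar : ℕ → Fin n → ℝ)
    (hopt : OptimalPro T α η γ pbar A e F pstar ustar) :
    ∀ tstar, tstar + 1 < T → budget ustar tstar < F tstar →
      ∀ t, tstar < t → t < T → ∀ i, ustar t i = 0 :=
  stmt5_no_late_injection_prorata_general n T α hα Pbar hPbar hPdiag pbar hpbar A hA e he F hFmono η
    γ hη1 hγ pstar ustar hopt
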